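/- Let A, B, C be positive integers with D := B² − 4AC > 0, and let q(m,n) = A·m² + B·m·n + C·n². Then √D < B, and the series whose terms are 1/( e(x,y) · e(x,x+y) · e(y,x+y) ), summed over all pairs (x,y) ∈ S, converges and its sum equals (1/D)·( artanh(√D/B)/√D − 1/B ), where artanh is the inverse hyperbolic tangent. (This is the paper's Theorem 6, formula (top4), for the topograph of q rooted at the standard-basis edge, with root edge label e₀ = B.) -/

import Mathlib

/-- The binary quadratic form `q(m,n) = A m² + B m n + C n²`, with real values. -/
noncomputable def q (A B C : ℤ) (v : ℤ × ℤ) : ℝ :=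
  (A : ℝ) * (v.1 : ℝ) ^ 2 + (B : ℝ) * (v.1 : ℝ) * (v.2 : ℝ) + (C : ℝ) * (v.2 : ℝ) ^ 2

/-- The edge label `e(u,v) = q(u+v) − q(u) − q(v)` (twice the polar form of `q`). -/
noncomputable def eLab (A B C : ℤ) (u v : ℤ × ℤ) : ℝ :=
  q A B C (u + v) - q A B C u - q A B C v

/-- Pairs of lattice vectors with nonnegative coordinates and determinant one. -/
def S : Set ((ℤ × ℤ) × (ℤ × ℤ)) :=
  {p | 0 ≤ p.1.1 ∧ 0 ≤ p.1.2 ∧ 0 ≤ p.2.1 ∧ 0 ≤ p.2.2 ∧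
    p.1.1 * p.2.2 - p.1.2 * p.2.1 = 1}

/-- The inverse hyperbolic tangent. -/
noncomputable def artanh (x : ℝ) : ℝ := (1 / 2) * Real.log ((1 + x) / (1 - x))

/-!
The pairs in `S` form a rooted binary tree: apart from the root `((1,0),(0,1))`, every pair
arises in exactly one way as `(x, x + y)` or `(x + y, y)` from a pair `(x, y) ∈ S`.
Write `e₁ = e(x,y)`, `e₂ = e(x,x+y) = e₁ + 2q(x)` and `e₃ = e(x+y,y) = e₁ + 2q(y)`.
Since `det(x,y) = 1`, `e₁e₂ + e₁e₃ - e₂e₃ = e₁² - 4q(x)q(y) = D`, and this relation is exactly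
what the artanh addition formula needs to give
`artanh(√D/e₁) = artanh(√D/e₂) + artanh(√D/e₃)`. Hence
`φ(e) = subtreeSum D e = (artanh(√D/e)/√D - 1/e)/D` satisfies
`φ(e₁) = 1/(e₁e₂e₃) + φ(e₂) + φ(e₃)`: each term of the series is `φ` at a node minus `φ` at its
two children, and the series telescopes to `φ(B)`, the value at the root. Telescoping over the
whole tree is legitimate because `φ ∘ e` is summable on `S`: `φ(e) = O(e⁻²)`,
`e(x,y) ≥ (x₁+x₂)(y₁+y₂)`, and `(x,y) ↦ (x₁+x₂, y₁+y₂)` is injective on `S`.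
-/

theorem self_le_artanh {x : ℝ} (h0 : 0 ≤ x) (h1 : x < 1) : x ≤ artanh x := by
  have hseries := Real.hasSum_log_sub_log_of_abs_lt_one (abs_lt.mpr ⟨by linarith, h1⟩)
  have hfirst := le_hasSum hseries 0 fun k _ => by positivity
  rw [← Real.log_div (by linarith) (by linarith)] at hfirst
  unfold artanh
  norm_num at hfirst
  linarith

theorem artanh_le_div {x : ℝ} (h0 : -1 < x) (h1 : x < 1) : artanh x ≤ x / (1 - x) := by
  have hlog := Real.log_le_sub_one_of_pos (show 0 < (1 + x) / (1 - x) from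
    div_pos (by linarith) (by linarith))
  have : (1 + x) / (1 - x) - 1 = 2 * (x / (1 - x)) := by
    field_simp [(by linarith : 1 - x ≠ 0)]; ring
  unfold artanh
  linarith

theorem artanh_add_artanh {u v : ℝ} (hu : |u| < 1) (hv : |v| < 1) :
    artanh u + artanh v = artanh ((u + v) / (1 + u * v)) := by
  obtain ⟨hu₀, hu₁⟩ := abs_lt.mp hu
  obtain ⟨hv₀, hv₁⟩ := abs_lt.mp hv
  have huv : 0 < 1 + u * v := by nlinarith
  have hprod : (1 + u) / (1 - u) * ((1 + v) / (1 - v)) =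
      (1 + (u + v) / (1 + u * v)) / (1 - (u + v) / (1 + u * v)) := by
    rw [one_add_div huv.ne', one_sub_div huv.ne', div_div_div_cancel_right₀ huv.ne',
      div_mul_div_comm]
    congr 1 <;> ring
  have h1u : 0 < (1 + u) / (1 - u) := div_pos (by linarith) (by linarith)
  have h1v : 0 < (1 + v) / (1 - v) := div_pos (by linarith) (by linarith)
  unfold artanh
  rw [← mul_add, ← Real.log_mul h1u.ne' h1v.ne', hprod]

noncomputable def subtreeSum (d e : ℝ) : ℝ :=
  1 / d * (artanh (Real.sqrt d / e) / Real.sqrt d - 1 / e)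

section SubtreeSum

variable {d e : ℝ}

theorem subtreeSum_eq_div (hd : 0 < d) :
    subtreeSum d e =
      (artanh (Real.sqrt d / e) - Real.sqrt d / e) / (d * Real.sqrt d) := by
  have hs : Real.sqrt d ≠ 0 := (Real.sqrt_pos.mpr hd).ne'
  unfold subtreeSum
  field_simp

theorem subtreeSum_nonneg (hd : 0 < d) (he : Real.sqrt d < e) : 0 ≤ subtreeSum d e := by
  have hs := Real.sqrt_pos.mpr hd
  have hx : Real.sqrt d / e < 1 := (div_lt_one (hs.trans he)).mpr he
  rw [subtreeSum_eq_div hd]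
  exact div_nonneg (sub_nonneg.mpr (self_le_artanh (div_pos hs (hs.trans he)).le hx))
    (mul_pos hd hs).le

theorem subtreeSum_le {b : ℝ} (hd : 0 < d) (hb : Real.sqrt d < b) (hbe : b ≤ e) :
    subtreeSum d e ≤ b / (Real.sqrt d * (b - Real.sqrt d)) / e ^ 2 := by
  set s := Real.sqrt d
  have hs : 0 < s := Real.sqrt_pos.mpr hd
  have hsd : s ^ 2 = d := Real.sq_sqrt hd.le
  have he : 0 < e := by linarith
  have hx : s / e < 1 := (div_lt_one he).mpr (by linarith)
  calc subtreeSum d e ≤ (s / e / (1 - s / e) - s / e) / (d * s) := by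
        rw [subtreeSum_eq_div hd]
        gcongr
        exact artanh_le_div (by linarith [show 0 < s / e by positivity]) hx
    _ = 1 / (s * e * (e - s)) := by
        rw [← hsd]
        field_simp [(by linarith : e - s ≠ 0)]
        ring
    _ ≤ b / (s * (b - s)) / e ^ 2 := by
        have hes : 0 < e - s := by linarith
        have hbs : 0 < b - s := by linarith
        rw [div_div, div_le_div_iff₀ (by positivity) (by positivity)]
        nlinarith [mul_nonneg (mul_nonneg hs.le he.le) (mul_nonneg hs.le (sub_nonneg.mpr hbe))]

theorem subtreeSum_eq_add {e₁ e₂ e₃ : ℝ} (hd : 0 < d) (h₁ : Real.sqrt d < e₁)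
    (h₂ : Real.sqrt d < e₂) (h₃ : Real.sqrt d < e₃) (h : e₁ * e₂ + e₁ * e₃ - e₂ * e₃ = d) :
    subtreeSum d e₁ = 1 / (e₁ * e₂ * e₃) + subtreeSum d e₂ + subtreeSum d e₃ := by
  unfold subtreeSum
  set s := Real.sqrt d
  have hs : 0 < s := Real.sqrt_pos.mpr hd
  have hsd : s ^ 2 = d := Real.sq_sqrt hd.le
  have he₁ : 0 < e₁ := hs.trans h₁
  have he₂ : 0 < e₂ := hs.trans h₂
  have he₃ : 0 < e₃ := hs.trans h₃
  have habs {e : ℝ} (he : s < e) : |s / e| < 1 := by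
    rw [abs_of_pos (div_pos hs (hs.trans he)), div_lt_one (hs.trans he)]; exact he
  have hadd : artanh (s / e₁) = artanh (s / e₂) + artanh (s / e₃) := by
    rw [artanh_add_artanh (habs h₂) (habs h₃)]
    congr 1
    field_simp
    linear_combination hsd - h
  rw [hadd]
  field_simp
  linear_combination s * h

end SubtreeSum

theorem hasSum_sub_sub_of_equiv {α E : Type*} [AddCommGroup E] [UniformSpace E]
    [IsUniformAddGroup E] [CompleteSpace E] (e : Unit ⊕ α ⊕ α ≃ α) {F : α → E}
    (hF : Summable F) :
    HasSum (fun a => F a - F (e (.inr (.inl a))) - F (e (.inr (.inr a)))) (F (e (.inl ()))) := by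
  have h₁ := (hF.comp_injective <|
    e.injective.comp (Sum.inr_injective.comp Sum.inl_injective)).hasSum
  have h₂ := (hF.comp_injective <|
    e.injective.comp (Sum.inr_injective.comp Sum.inr_injective)).hasSum
  have hall := e.hasSum_iff.mp ((hasSum_unique (F ∘ e ∘ Sum.inl)).sum (h₁.sum h₂))
  convert (hall.sub h₁).sub h₂ using 1
  simp only [Function.comp_apply]
  abel

def rootS : S := ⟨((1, 0), (0, 1)), by norm_num [S]⟩

theorem mem_S_left {x y : ℤ × ℤ} (h : (x, y) ∈ S) : (x, x + y) ∈ S := by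
  obtain ⟨h₁, h₂, h₃, h₄, h⟩ := h
  refine ⟨h₁, h₂, add_nonneg h₁ h₃, add_nonneg h₂ h₄, ?_⟩
  dsimp only [Prod.fst_add, Prod.snd_add] at h ⊢
  linear_combination h

theorem mem_S_right {x y : ℤ × ℤ} (h : (x, y) ∈ S) : (x + y, y) ∈ S := by
  obtain ⟨h₁, h₂, h₃, h₄, h⟩ := h
  refine ⟨add_nonneg h₁ h₃, add_nonneg h₂ h₄, h₃, h₄, ?_⟩
  dsimp only [Prod.fst_add, Prod.snd_add] at h ⊢
  linear_combination h

def leftS (p : S) : S := ⟨(p.1.1, p.1.1 + p.1.2), mem_S_left p.2⟩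

def rightS (p : S) : S := ⟨(p.1.1 + p.1.2, p.1.2), mem_S_right p.2⟩

theorem mem_S_cases {a b c d : ℤ} (h : ((a, b), (c, d)) ∈ S) :
    (a ≤ c ∧ b ≤ d) ∨ (c ≤ a ∧ d ≤ b) ∨ (a = 1 ∧ b = 0 ∧ c = 0 ∧ d = 1) := by
  obtain ⟨ha, hb, hc, hd, hdet⟩ := h
  simp only at ha hb hc hd hdet
  rcases le_total a c with hac | hca <;> rcases le_total b d with hbd | hdb
  · exact Or.inl ⟨hac, hbd⟩
  · nlinarith [mul_le_mul hac hdb hd hc]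
  · rcases hca.eq_or_lt with rfl | hca
    · exact Or.inl ⟨le_rfl, hbd⟩
    rcases hbd.eq_or_lt with rfl | hbd
    · exact Or.inr (Or.inl ⟨hca.le, le_rfl⟩)
    have hprod := mul_le_mul (Int.add_one_le_of_lt hca) (Int.add_one_le_of_lt hbd) (by omega) ha
    have hbc : b = 0 ∧ c = 0 := by constructor <;> nlinarith
    obtain ⟨rfl, rfl⟩ := hbc
    have had : a = 1 ∧ d = 1 := by constructor <;> nlinarith
    exact Or.inr (Or.inr ⟨had.1, rfl, rfl, had.2⟩)
  · exact Or.inr (Or.inl ⟨hca, hdb⟩)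

theorem coord_sums_pos_of_mem_S {x y : ℤ × ℤ} (h : (x, y) ∈ S) :
    0 < x.1 + x.2 ∧ 0 < y.1 + y.2 := by
  obtain ⟨ha, hb, hc, hd, hdet⟩ := h
  constructor <;> by_contra! <;> nlinarith

theorem leftS_injective : Function.Injective leftS := by
  rintro ⟨⟨x, y⟩, _⟩ ⟨⟨x', y'⟩, _⟩ h
  simp only [leftS, Subtype.mk.injEq, Prod.mk.injEq] at h
  obtain ⟨rfl, h⟩ := h
  rw [add_right_inj] at h
  subst h; rfl

theorem rightS_injective : Function.Injective rightS := by
  rintro ⟨⟨x, y⟩, _⟩ ⟨⟨x', y'⟩, _⟩ h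
  simp only [rightS, Subtype.mk.injEq, Prod.mk.injEq] at h
  obtain ⟨h, rfl⟩ := h
  rw [add_left_inj] at h
  subst h; rfl

theorem leftS_ne_rightS (p q : S) : leftS p ≠ rightS q := by
  obtain ⟨⟨⟨a, b⟩, ⟨c, d⟩⟩, hp⟩ := p
  obtain ⟨⟨⟨a', b'⟩, ⟨c', d'⟩⟩, hq⟩ := q
  have := coord_sums_pos_of_mem_S hq
  obtain ⟨-, -, hc, hd, -⟩ := hp
  obtain ⟨ha', hb', -⟩ := hq
  simp only at this hc hd ha' hb'
  simp only [leftS, rightS, Ne, Subtype.mk.injEq, Prod.mk_add_mk, Prod.mk.injEq]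
  omega

theorem rootS_ne_leftS (p : S) : rootS ≠ leftS p := by
  obtain ⟨⟨⟨a, b⟩, ⟨c, d⟩⟩, -, -, hc, -⟩ := p
  simp only at hc
  simp only [rootS, leftS, Ne, Subtype.ext_iff, Prod.mk_add_mk, Prod.mk.injEq]
  omega

theorem rootS_ne_rightS (p : S) : rootS ≠ rightS p := by
  obtain ⟨⟨⟨a, b⟩, ⟨c, d⟩⟩, -, hb, -⟩ := p
  simp only at hb
  simp only [rootS, rightS, Ne, Subtype.ext_iff, Prod.mk_add_mk, Prod.mk.injEq]
  omega

theorem eq_rootS_or_mem_range (p : S) :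
    p = rootS ∨ p ∈ Set.range leftS ∨ p ∈ Set.range rightS := by
  obtain ⟨⟨⟨a, b⟩, ⟨c, d⟩⟩, hp⟩ := p
  rcases mem_S_cases hp with h | h | ⟨rfl, rfl, rfl, rfl⟩
  · obtain ⟨ha, hb, -, -, hdet⟩ := hp
    refine Or.inr (Or.inl ⟨⟨((a, b), (c - a, d - b)), ha, hb, ?_, ?_, ?_⟩, ?_⟩)
    · exact sub_nonneg.mpr h.1
    · exact sub_nonneg.mpr h.2
    · dsimp only at hdet ⊢; linear_combination hdet
    · ext <;> simp [leftS]
  · obtain ⟨-, -, hc, hd, hdet⟩ := hp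
    refine Or.inr (Or.inr ⟨⟨((a - c, b - d), (c, d)), ?_, ?_, hc, hd, ?_⟩, ?_⟩)
    · exact sub_nonneg.mpr h.1
    · exact sub_nonneg.mpr h.2
    · dsimp only at hdet ⊢; linear_combination hdet
    · ext <;> simp [rightS]
  · exact Or.inl rfl

noncomputable def treeEquivS : Unit ⊕ S ⊕ S ≃ S :=
  Equiv.ofBijective (Sum.elim (fun _ => rootS) (Sum.elim leftS rightS)) <| by
    refine ⟨(Function.injective_of_subsingleton _).sumElim
      (leftS_injective.sumElim rightS_injective leftS_ne_rightS) ?_, fun p => ?_⟩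
    · rintro _ (p | p)
      exacts [rootS_ne_leftS p, rootS_ne_rightS p]
    · rcases eq_rootS_or_mem_range p with rfl | ⟨q, rfl⟩ | ⟨q, rfl⟩
      exacts [⟨.inl (), rfl⟩, ⟨.inr (.inl q), rfl⟩, ⟨.inr (.inr q), rfl⟩]

theorem injective_coord_sums :
    Function.Injective fun p : S => (p.1.1.1 + p.1.1.2, p.1.2.1 + p.1.2.2) := by
  rintro ⟨⟨⟨a, b⟩, ⟨c, d⟩⟩, hp⟩ ⟨⟨⟨a', b'⟩, ⟨c', d'⟩⟩, hp'⟩ h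
  have hσ₀ := (coord_sums_pos_of_mem_S hp).1
  obtain ⟨ha, hb, hc, hd, hdet⟩ := hp
  obtain ⟨ha', hb', hc', hd', hdet'⟩ := hp'
  simp only [Prod.mk.injEq] at ha hb hc hd hdet ha' hb' hc' hd' hdet' h hσ₀
  obtain ⟨hσ, hτ⟩ := h
  have h₁ : a * (c + d) - (a + b) * c = 1 := by linear_combination hdet
  have h₂ : a' * (c + d) - (a + b) * c' = 1 := by linear_combination hdet' + a' * hτ - c' * hσ
  -- `a + b` divides `a - a'`, which is smaller than `a + b` in absolute value.
  have key : (a + b) * (a' * c - a * c') = a - a' := by linear_combination a * h₂ - a' * h₁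
  have hlt : a - a' < a + b ∧ a' - a < a + b := by
    constructor <;> by_contra! hge
    · obtain ⟨rfl, rfl⟩ : a' = 0 ∧ b = 0 := by omega
      nlinarith [mul_nonneg ha hc']
    · obtain ⟨rfl, rfl⟩ : a = 0 ∧ b' = 0 := by omega
      nlinarith [mul_nonneg hb hc]
  have hk : a' * c - a * c' = 0 := by
    rcases lt_trichotomy (a' * c - a * c') 0 with hk | hk | hk
    · nlinarith
    · exact hk
    · nlinarith
  obtain rfl : a' = a := by rw [hk, mul_zero] at key; omega
  obtain rfl : b' = b := by omega
  obtain rfl : c' = c := by nlinarith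
  obtain rfl : d' = d := by omega
  rfl

section Labels

variable (A B C : ℤ)

theorem eLab_comm (x y : ℤ × ℤ) : eLab A B C x y = eLab A B C y x := by
  simp only [eLab, add_comm x y]
  ring

theorem eLab_mul_add_mul_sub_mul (x y : ℤ × ℤ) :
    eLab A B C x y * eLab A B C x (x + y) + eLab A B C x y * eLab A B C (x + y) y -
        eLab A B C x (x + y) * eLab A B C (x + y) y =
      ((B : ℝ) ^ 2 - 4 * A * C) * ((x.1 : ℝ) * y.2 - x.2 * y.1) ^ 2 := by
  simp only [eLab, q, Prod.fst_add, Prod.snd_add]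
  push_cast
  ring

theorem eLab_eq_intCast (x y : ℤ × ℤ) :
    eLab A B C x y =
      ((2 * A * (x.1 * y.1) + B * (x.1 * y.2 + x.2 * y.1) + 2 * C * (x.2 * y.2) : ℤ) : ℝ) := by
  simp only [eLab, q, Prod.fst_add, Prod.snd_add]
  push_cast
  ring

variable {A B C}

theorem le_eLab_of_mem_S (hA : 0 ≤ A) (hB : 0 ≤ B) (hC : 0 ≤ C) {x y : ℤ × ℤ}
    (h : (x, y) ∈ S) : (B : ℝ) ≤ eLab A B C x y := by
  obtain ⟨ha, hb, hc, hd, hdet⟩ := h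
  rw [eLab_eq_intCast]
  exact_mod_cast (by nlinarith [mul_nonneg ha hc, mul_nonneg hb hd, mul_nonneg hb hc] :
    B ≤ 2 * A * (x.1 * y.1) + B * (x.1 * y.2 + x.2 * y.1) + 2 * C * (x.2 * y.2))

theorem coord_sums_mul_le_eLab (hA : 0 < A) (hB : 0 < B) (hC : 0 < C) {x y : ℤ × ℤ}
    (h : (x, y) ∈ S) : ((x.1 + x.2 : ℤ) : ℝ) * (y.1 + y.2 : ℤ) ≤ eLab A B C x y := by
  obtain ⟨ha, hb, hc, hd, -⟩ := h
  rw [eLab_eq_intCast, ← Int.cast_mul]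
  exact_mod_cast (by
    nlinarith [mul_nonneg ha hc, mul_nonneg hb hd, mul_nonneg ha hd, mul_nonneg hb hc] :
    (x.1 + x.2) * (y.1 + y.2) ≤
      2 * A * (x.1 * y.1) + B * (x.1 * y.2 + x.2 * y.1) + 2 * C * (x.2 * y.2))

theorem summable_subtreeSum_eLab (hA : 0 < A) (hB : 0 < B) (hC : 0 < C) {d : ℝ} (hd : 0 < d)
    (hdB : Real.sqrt d < B) : Summable fun p : S => subtreeSum d (eLab A B C p.1.1 p.1.2) := by
  have hg : Summable fun n : ℤ × ℤ => 1 / (n.1 : ℝ) ^ 2 * (1 / (n.2 : ℝ) ^ 2) := by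
    have h := Real.summable_one_div_int_pow.mpr one_lt_two
    exact h.mul_of_nonneg h (fun _ => by positivity) (fun _ => by positivity)
  refine Summable.of_nonneg_of_le (fun p => subtreeSum_nonneg hd ?_) (fun p => ?_)
    ((hg.comp_injective injective_coord_sums).mul_left (B / (Real.sqrt d * (B - Real.sqrt d))))
  · exact hdB.trans_le (le_eLab_of_mem_S hA.le hB.le hC.le p.2)
  have hσ := coord_sums_pos_of_mem_S p.2
  have hle := coord_sums_mul_le_eLab hA hB hC p.2
  have hprod : (0 : ℝ) < ((p.1.1.1 + p.1.1.2 : ℤ) : ℝ) * (p.1.2.1 + p.1.2.2 : ℤ) := by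
    exact_mod_cast mul_pos hσ.1 hσ.2
  calc subtreeSum d (eLab A B C p.1.1 p.1.2)
      ≤ B / (Real.sqrt d * (B - Real.sqrt d)) / (eLab A B C p.1.1 p.1.2) ^ 2 :=
        subtreeSum_le hd hdB (le_eLab_of_mem_S hA.le hB.le hC.le p.2)
    _ ≤ _ := by
        have : 0 < B / (Real.sqrt d * (B - Real.sqrt d)) := by
          have := Real.sqrt_pos.mpr hd
          have : 0 < (B : ℝ) - Real.sqrt d := by linarith
          positivity
        simp only [Function.comp_apply, one_div_mul_one_div, ← mul_pow]
        rw [div_eq_mul_one_div]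
        gcongr

end Labels

theorem one_div_eLab_mul_eq_subtreeSum_sub {A B C : ℤ} (hA : 0 < A) (hB : 0 < B) (hC : 0 < C)
    (hD : 0 < (B : ℝ) ^ 2 - 4 * A * C) (hDB : Real.sqrt ((B : ℝ) ^ 2 - 4 * A * C) < B)
    {x y : ℤ × ℤ} (h : (x, y) ∈ S) :
    1 / (eLab A B C x y * eLab A B C x (x + y) * eLab A B C y (x + y)) =
      subtreeSum ((B : ℝ) ^ 2 - 4 * A * C) (eLab A B C x y) -
        subtreeSum ((B : ℝ) ^ 2 - 4 * A * C) (eLab A B C x (x + y)) -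
        subtreeSum ((B : ℝ) ^ 2 - 4 * A * C) (eLab A B C (x + y) y) := by
  have hlabel {u v : ℤ × ℤ} (huv : (u, v) ∈ S) :
      Real.sqrt ((B : ℝ) ^ 2 - 4 * A * C) < eLab A B C u v :=
    hDB.trans_le (le_eLab_of_mem_S hA.le hB.le hC.le huv)
  have hdet : ((x.1 : ℝ) * y.2 - x.2 * y.1) = 1 := by exact_mod_cast h.2.2.2.2
  rw [subtreeSum_eq_add hD (hlabel h) (hlabel (mem_S_left h)) (hlabel (mem_S_right h)),
    eLab_comm A B C y]
  · ring
  · rw [eLab_mul_add_mul_sub_mul, hdet, one_pow, mul_one]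

theorem stmt_3 (A B C : ℤ) (hA : 0 < A) (hB : 0 < B) (hC : 0 < C)
    (hD : 0 < B ^ 2 - 4 * A * C) :
    Real.sqrt ((B : ℝ) ^ 2 - 4 * A * C) < (B : ℝ) ∧
    HasSum
      (fun p : S =>
        1 / (eLab A B C p.val.1 p.val.2 * eLab A B C p.val.1 (p.val.1 + p.val.2) *
          eLab A B C p.val.2 (p.val.1 + p.val.2)))
      ((1 / ((B : ℝ) ^ 2 - 4 * A * C)) *
        (artanh (Real.sqrt ((B : ℝ) ^ 2 - 4 * A * C) / (B : ℝ)) /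
            Real.sqrt ((B : ℝ) ^ 2 - 4 * A * C) -
          1 / (B : ℝ))) := by
  have hD' : (0 : ℝ) < (B : ℝ) ^ 2 - 4 * A * C := by exact_mod_cast hD
  have hDB : Real.sqrt ((B : ℝ) ^ 2 - 4 * A * C) < B := by
    have hAC : (0 : ℝ) < A * C := by positivity
    rw [Real.sqrt_lt' (by positivity)]
    linarith
  refine ⟨hDB, ?_⟩
  have hsum := hasSum_sub_sub_of_equiv treeEquivS (summable_subtreeSum_eLab hA hB hC hD' hDB)
  have hroot : eLab A B C (1, 0) (0, 1) = B := by
    rw [eLab_eq_intCast]; norm_num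
  have hterm := fun p : S => one_div_eLab_mul_eq_subtreeSum_sub hA hB hC hD' hDB p.2
  simp only [treeEquivS, Equiv.ofBijective_apply, Sum.elim_inl, Sum.elim_inr, rootS, leftS,
    rightS, hroot] at hsum
  simp only [hterm]
  exact hsum
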